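/- arXiv:1806.08036 — 2 statements merged into one kernel-verified Lean document; each statement's English description precedes it below -/
import Mathlib

section
/- Let K₀ be an origin symmetric convex body in ℝ^n, let w ∈ ℝ₊^n, and let K = K₀ + w B∞ where B∞ is the ℓ∞ unit ball. If ξ and η are integrable random vectors in ℝ^n with E[h(uK, ξ)] = E[h(uK, η)] for all u ∈ ℝ^n, then E[h(uK₀, ξ)] = E[h(uK₀, η)] for all u ∈ ℝ^n. -/
open MeasureTheory Finset Pointwise

/-- Hadamard (componentwise) product. -/
def had {n : ℕ} (u v : Fin n → ℝ) : Fin n → ℝ := fun i => u i * v i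

/-- Support function of a set `K ⊆ ℝⁿ`. -/
noncomputable def suppFn {n : ℕ} (K : Set (Fin n → ℝ)) (u : Fin n → ℝ) : ℝ :=
  sSup ((fun x => ∑ i, u i * x i) '' K)

namespace Stmt4Aux

variable {n : ℕ}

lemma cont_lsum (v : Fin n → ℝ) : Continuous (fun k : Fin n → ℝ => ∑ i, v i * k i) :=
  continuous_finset_sum _ fun i _ => continuous_const.mul (continuous_apply i)

lemma bdd_img (v : Fin n → ℝ) {S : Set (Fin n → ℝ)} (hS : IsCompact S) :
    BddAbove ((fun x => ∑ i, v i * x i) '' S) :=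
  (hS.image (cont_lsum v)).bddAbove

lemma suppFn_had (u : Fin n → ℝ) (S : Set (Fin n → ℝ)) (x : Fin n → ℝ) :
    suppFn (had u '' S) x = suppFn S (had x u) := by
  unfold suppFn
  rw [← Set.image_comp]
  congr 1
  apply Set.image_congr'
  intro k
  simp only [Function.comp_apply, had]
  exact Finset.sum_congr rfl fun i _ => by ring

/-- additivity of the support function over Minkowski sums -/
lemma suppFn_add {A B : Set (Fin n → ℝ)} (hA : IsCompact A) (hAne : A.Nonempty)
    (hB : IsCompact B) (hBne : B.Nonempty) (v : Fin n → ℝ) :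
    suppFn (A + B) v = suppFn A v + suppFn B v := by
  classical
  unfold suppFn
  have himg : (fun x : Fin n → ℝ => ∑ i, v i * x i) '' (A + B)
      = ((fun x : Fin n → ℝ => ∑ i, v i * x i) '' A) + ((fun x : Fin n → ℝ => ∑ i, v i * x i) '' B) := by
    ext z
    constructor
    · rintro ⟨y, ⟨a, ha, b, hb, rfl⟩, rfl⟩
      exact ⟨_, ⟨a, ha, rfl⟩, _, ⟨b, hb, rfl⟩, by
        simp [mul_add, Finset.sum_add_distrib]⟩
    · rintro ⟨-, ⟨a, ha, rfl⟩, -, ⟨b, hb, rfl⟩, rfl⟩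
      exact ⟨a + b, ⟨a, ha, b, hb, rfl⟩, by simp [mul_add, Finset.sum_add_distrib]⟩
  rw [himg, csSup_add (hAne.image _) (bdd_img v hA) (hBne.image _) (bdd_img v hB)]

/-- support function of the cube -/
lemma suppFn_box (v : Fin n → ℝ) :
    suppFn {x : Fin n → ℝ | ∀ i, |x i| ≤ 1} v = ∑ i, |v i| := by
  apply IsGreatest.csSup_eq
  constructor
  · refine ⟨fun i => if 0 ≤ v i then 1 else -1, fun i => ?_, ?_⟩
    · by_cases h : 0 ≤ v i <;> simp [h]
    · apply Finset.sum_congr rfl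
      intro i _
      by_cases h : 0 ≤ v i
      · simp [h, abs_of_nonneg h]
      · simp [h, abs_of_neg (lt_of_not_ge h)]
  · rintro z ⟨k, hk, rfl⟩
    apply Finset.sum_le_sum
    intro i _
    calc v i * k i ≤ |v i * k i| := le_abs_self _
      _ = |v i| * |k i| := abs_mul _ _
      _ ≤ |v i| * 1 := mul_le_mul_of_nonneg_left (hk i) (abs_nonneg _)
      _ = |v i| := mul_one _

lemma mulSup (c : ℝ) {T : Set ℝ} (hT : IsCompact T) (hne : T.Nonempty)
    (hsym : ∀ t ∈ T, -t ∈ T) :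
    sSup ((fun t => c * t) '' T) = |c| * sSup T := by
  have hM : IsGreatest T (sSup T) := ⟨hT.sSup_mem hne, fun t ht => le_csSup hT.bddAbove ht⟩
  have hMnn : 0 ≤ sSup T := by
    obtain ⟨t, ht⟩ := hne
    have h1 := hM.2 ht
    have h2 := hM.2 (hsym t ht)
    linarith
  apply IsGreatest.csSup_eq
  constructor
  · by_cases h : 0 ≤ c
    · exact ⟨sSup T, hM.1, by rw [abs_of_nonneg h]⟩
    · exact ⟨-sSup T, hsym _ hM.1, by rw [abs_of_neg (lt_of_not_ge h)]; ring⟩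
  · rintro z ⟨t, ht, rfl⟩
    calc c * t ≤ |c * t| := le_abs_self _
      _ = |c| * |t| := abs_mul _ _
      _ ≤ |c| * sSup T := by
          apply mul_le_mul_of_nonneg_left _ (abs_nonneg c)
          rcases abs_cases t with ⟨h, _⟩ | ⟨h, _⟩
          · rw [h]; exact hM.2 ht
          · rw [h]; exact hM.2 (hsym t ht)


lemma lip_bound {S : Set (Fin n → ℝ)} (hSc : IsCompact S) (hSne : S.Nonempty)
    (u : Fin n → ℝ) {C : ℝ} (hC : ∀ k ∈ S, ∀ i, |k i| ≤ C) (x y : Fin n → ℝ) :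
    suppFn S (had x u) ≤ suppFn S (had y u) + (∑ i, |u i| * C) * ‖x - y‖ := by
  apply csSup_le (hSne.image _)
  rintro z ⟨k, hk, rfl⟩
  have h1 : ∑ i, had y u i * k i ≤ suppFn S (had y u) :=
    le_csSup (bdd_img _ hSc) ⟨k, hk, rfl⟩
  have h2 : ∑ i, (x i - y i) * (u i * k i) ≤ (∑ i, |u i| * C) * ‖x - y‖ := by
    rw [Finset.sum_mul]
    apply Finset.sum_le_sum
    intro i _
    have hxy : |x i - y i| ≤ ‖x - y‖ := by
      have := norm_le_pi_norm (x - y) i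
      simpa [Real.norm_eq_abs] using this
    have hki : |k i| ≤ C := hC k hk i
    have hCnn : 0 ≤ C := le_trans (abs_nonneg _) hki
    calc (x i - y i) * (u i * k i) ≤ |(x i - y i) * (u i * k i)| := le_abs_self _
      _ = |x i - y i| * (|u i| * |k i|) := by rw [abs_mul, abs_mul]
      _ ≤ ‖x - y‖ * (|u i| * C) :=
          mul_le_mul hxy (mul_le_mul_of_nonneg_left hki (abs_nonneg _)) (by positivity)
            (norm_nonneg _)
      _ = |u i| * C * ‖x - y‖ := by ring
  calc ∑ i, had x u i * k i
      = ∑ i, had y u i * k i + ∑ i, (x i - y i) * (u i * k i) := by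
        rw [← Finset.sum_add_distrib]
        apply Finset.sum_congr rfl
        intro i _
        simp only [had]
        ring
    _ ≤ suppFn S (had y u) + (∑ i, |u i| * C) * ‖x - y‖ := add_le_add h1 h2

lemma suppFn_zero {S : Set (Fin n → ℝ)} (hSne : S.Nonempty) : suppFn S 0 = 0 := by
  unfold suppFn
  have : (fun x : Fin n → ℝ => ∑ i, (0 : Fin n → ℝ) i * x i) '' S = {0} := by
    rw [show (fun x : Fin n → ℝ => ∑ i, (0 : Fin n → ℝ) i * x i) = fun _ => (0:ℝ) by
      funext x; simp]
    exact hSne.image_const 0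
  rw [this, csSup_singleton]

lemma had_zero (u : Fin n → ℝ) : had (0 : Fin n → ℝ) u = 0 := by
  funext i; simp [had]

lemma integrable_suppFn {Ω : Type*} [MeasurableSpace Ω] (P : Measure Ω)
    {S : Set (Fin n → ℝ)} (hSc : IsCompact S) (hSne : S.Nonempty)
    (u : Fin n → ℝ) {ξ : Ω → Fin n → ℝ} (hξ : Integrable ξ P) :
    Integrable (fun ω => suppFn S (had (ξ ω) u)) P := by
  obtain ⟨C₀, hC₀⟩ := hSc.isBounded.exists_norm_le
  set C := max C₀ 0 with hCdef
  have hC : ∀ k ∈ S, ∀ i, |k i| ≤ C := fun k hk i => by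
    have h1 : ‖k i‖ ≤ ‖k‖ := norm_le_pi_norm k i
    have h2 : ‖k‖ ≤ C := le_trans (hC₀ k hk) (le_max_left _ _)
    have := le_trans h1 h2
    simpa [Real.norm_eq_abs] using this
  set L := ∑ i, |u i| * C with hLdef
  have hLnn : 0 ≤ L := Finset.sum_nonneg fun i _ => by positivity
  have hbound : ∀ x : Fin n → ℝ, |suppFn S (had x u)| ≤ L * ‖x‖ := by
    intro x
    rw [abs_le]
    constructor
    · have := lip_bound hSc hSne u hC 0 x
      rw [had_zero, suppFn_zero hSne, zero_sub, norm_neg] at this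
      linarith [this]
    · have := lip_bound hSc hSne u hC x 0
      rw [had_zero, suppFn_zero hSne, zero_add, sub_zero] at this
      exact this
  have hlip : Continuous (fun x : Fin n → ℝ => suppFn S (had x u)) := by
    apply LipschitzWith.continuous (K := Real.toNNReal L)
    apply LipschitzWith.of_dist_le_mul
    intro x y
    rw [Real.dist_eq, dist_eq_norm]
    have h1 := lip_bound hSc hSne u hC x y
    have h2 := lip_bound hSc hSne u hC y x
    rw [show ‖y - x‖ = ‖x - y‖ from by rw [← norm_neg]; ring_nf] at h2
    rw [abs_le]
    have hcoe : (Real.toNNReal L : ℝ) = L := Real.coe_toNNReal L hLnn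
    constructor <;> rw [hcoe] <;> linarith
  apply Integrable.mono (hξ.norm.const_mul L)
  · exact hlip.comp_aestronglyMeasurable hξ.1
  · filter_upwards with ω
    rw [Real.norm_eq_abs, Real.norm_eq_abs]
    exact le_trans (hbound (ξ ω)) (le_abs_self _)

lemma integrable_abs_coord {Ω : Type*} [MeasurableSpace Ω] (P : Measure Ω)
    {ξ : Ω → Fin n → ℝ} (hξ : Integrable ξ P) (i : Fin n) :
    Integrable (fun ω => |ξ ω i|) P := by
  apply Integrable.mono hξ.norm
  · exact (continuous_abs.comp (continuous_apply i)).comp_aestronglyMeasurable hξ.1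
  · filter_upwards with ω
    rw [Real.norm_eq_abs, Real.norm_eq_abs, abs_abs, abs_norm]
    have := norm_le_pi_norm (ξ ω) i
    simpa [Real.norm_eq_abs] using this

end Stmt4Aux

open Stmt4Aux in
theorem stmt4 {n : ℕ} {Ω : Type*} [MeasurableSpace Ω] (P : Measure Ω)
    [IsProbabilityMeasure P]
    (K₀ : Set (Fin n → ℝ)) (hK₀conv : Convex ℝ K₀) (hK₀cpt : IsCompact K₀)
    (hK₀ne : K₀.Nonempty) (hK₀sym : K₀ = -K₀)
    (w : Fin n → ℝ) (hw : ∀ i, 0 ≤ w i)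
    (K : Set (Fin n → ℝ))
    (hK : K = K₀ + had w '' {x : Fin n → ℝ | ∀ i, |x i| ≤ 1})
    (ξ η : Ω → Fin n → ℝ) (hξ : Integrable ξ P) (hη : Integrable η P)
    (heq : ∀ u : Fin n → ℝ,
      ∫ ω, suppFn (had u '' K) (ξ ω) ∂P = ∫ ω, suppFn (had u '' K) (η ω) ∂P) :
    ∀ u : Fin n → ℝ,
      ∫ ω, suppFn (had u '' K₀) (ξ ω) ∂P = ∫ ω, suppFn (had u '' K₀) (η ω) ∂P := by
  intro u
  simp_rw [suppFn_had] at heq ⊢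
  set B : Set (Fin n → ℝ) := {x : Fin n → ℝ | ∀ i, |x i| ≤ 1} with hBdef
  have hBc : IsCompact B := by
    have : B = Set.pi Set.univ (fun _ => Set.Icc (-1:ℝ) 1) := by
      ext x; simp [hBdef, Set.mem_pi, abs_le, Pi.le_def, forall_and]
    rw [this]; exact isCompact_univ_pi fun i => isCompact_Icc
  have hBne : B.Nonempty := ⟨0, fun i => by simp⟩
  have hWcont : Continuous (had w) :=
    continuous_pi fun i => continuous_const.mul (continuous_apply i)
  have hWc : IsCompact (had w '' B) := hBc.image hWcont
  have hWne : (had w '' B).Nonempty := hBne.image _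
  have hKc : IsCompact K := by rw [hK]; exact hK₀cpt.add hWc
  have hKne : K.Nonempty := by rw [hK]; exact hK₀ne.add hWne
  -- pointwise decomposition
  have hpt : ∀ v u' : Fin n → ℝ, suppFn K (had v u')
      = suppFn K₀ (had v u') + ∑ i, (|u' i| * w i) * |v i| := by
    intro v u'
    rw [hK, suppFn_add hK₀cpt hK₀ne hWc hWne, suppFn_had w B (had v u'), suppFn_box]
    congr 1
    apply Finset.sum_congr rfl
    intro i _
    simp only [had]
    rw [abs_mul, abs_mul, abs_of_nonneg (hw i)]
    ring
  -- nonnegativity helper: 0 ∈ K₀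
  have h0K₀ : (0 : Fin n → ℝ) ∈ K₀ := by
    obtain ⟨x, hx⟩ := hK₀ne
    have hx' : -x ∈ K₀ := by rw [hK₀sym]; simpa using hx
    have h := hK₀conv hx hx' (by norm_num : (0:ℝ) ≤ 1/2)
      (by norm_num : (0:ℝ) ≤ 1/2) (by norm_num)
    have : (1/2 : ℝ) • x + (1/2 : ℝ) • (-x) = 0 := by
      rw [smul_neg]; abel
    rwa [this] at h
  -- coordinate equalities
  have hcoord : ∀ i : Fin n, w i * ∫ ω, |ξ ω i| ∂P = w i * ∫ ω, |η ω i| ∂P := by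
    intro i
    set e : Fin n → ℝ := Pi.single i 1 with hedef
    set m : ℝ := sSup ((fun k : Fin n → ℝ => k i) '' K₀) with hmdef
    have hK₀i : IsCompact ((fun k : Fin n → ℝ => k i) '' K₀) :=
      hK₀cpt.image (continuous_apply i)
    have hmnn : 0 ≤ m := le_csSup hK₀i.bddAbove ⟨0, h0K₀, rfl⟩
    have hm : ∀ v : Fin n → ℝ, suppFn K₀ (had v e) = |v i| * m := by
      intro v
      unfold suppFn
      have himg : (fun x : Fin n → ℝ => ∑ j, had v e j * x j) '' K₀
          = (fun t => v i * t) '' ((fun k : Fin n → ℝ => k i) '' K₀) := by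
        rw [← Set.image_comp]
        apply Set.image_congr'
        intro k
        simp only [Function.comp_apply]
        rw [Finset.sum_eq_single i]
        · simp [had, hedef, Pi.single_eq_same]
        · intro j _ hj; simp [had, hedef, Pi.single_eq_of_ne hj]
        · simp
      rw [himg]
      apply mulSup (v i) hK₀i (hK₀ne.image _)
      rintro t ⟨k, hk, rfl⟩
      refine ⟨-k, ?_, by simp⟩
      rw [hK₀sym]
      simpa [Set.mem_neg] using hk
    have hint : ∀ ζ : Ω → Fin n → ℝ, Integrable ζ P →
        ∫ ω, suppFn K (had (ζ ω) e) ∂P = (m + w i) * ∫ ω, |ζ ω i| ∂P := by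
      intro ζ hζ
      have hptw : ∀ ω, suppFn K (had (ζ ω) e) = (m + w i) * |ζ ω i| := by
        intro ω
        rw [hpt (ζ ω) e, hm]
        have hs : ∑ j, (|e j| * w j) * |ζ ω j| = w i * |ζ ω i| := by
          rw [Finset.sum_eq_single i]
          · simp [hedef, Pi.single_eq_same]
          · intro j _ hj; simp [hedef, Pi.single_eq_of_ne hj]
          · simp
        rw [hs]; ring
      simp_rw [hptw]
      rw [integral_const_mul]
    have h3 := heq e
    rw [hint ξ hξ, hint η hη] at h3
    by_cases hmw : m + w i = 0
    · have hwi : w i = 0 := by have := hw i; linarith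
      rw [hwi, zero_mul, zero_mul]
    · have hAB := mul_left_cancel₀ hmw h3
      rw [hAB]
  -- splitting the integral
  have hsplit : ∀ ζ : Ω → Fin n → ℝ, Integrable ζ P →
      ∫ ω, suppFn K₀ (had (ζ ω) u) ∂P
        = ∫ ω, suppFn K (had (ζ ω) u) ∂P
          - ∑ i, (|u i| * w i) * ∫ ω, |ζ ω i| ∂P := by
    intro ζ hζ
    have hintK : Integrable (fun ω => suppFn K (had (ζ ω) u)) P :=
      integrable_suppFn P hKc hKne u hζ
    have hintc : ∀ i : Fin n, Integrable (fun ω => (|u i| * w i) * |ζ ω i|) P :=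
      fun i => (integrable_abs_coord P hζ i).const_mul _
    have hfe : (fun ω => suppFn K₀ (had (ζ ω) u))
        = fun ω => suppFn K (had (ζ ω) u) - ∑ i, (|u i| * w i) * |ζ ω i| := by
      funext ω
      rw [hpt (ζ ω) u]
      ring
    rw [hfe, integral_sub hintK (integrable_finset_sum _ fun i _ => hintc i),
      integral_finset_sum _ fun i _ => hintc i]
    congr 1
    apply Finset.sum_congr rfl
    intro i _
    rw [integral_const_mul]
  rw [hsplit ξ hξ, hsplit η hη, heq u]
  congr 1
  apply Finset.sum_congr rfl
  intro i _
  rw [mul_assoc, mul_assoc, hcoord i]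
end

section
/- Let ζ be a nonnegative integrable random vector in ℝ^n, K = E[ζ B₁] the expectation (in the sense of support functions: h(K,u) = E h(ζB₁, u)) of the random diagonal transform of the ℓ₁-ball. For j ∈ {1,...,n}, if P(ζⱼ = 0) = 0 then the support set F(K, eⱼ) is a singleton. -/
/-!
For the ℓ₁-ball, `h(ζB₁, u) = ‖uζ‖_∞`, so `h(K, eⱼ) = E ζⱼ` and every `y` in the support set
`F(K, eⱼ)` has `yⱼ = E ζⱼ`. For `i ≠ j` and `m > 0`, testing `y` against `eⱼ ± eᵢ / m` gives
`yⱼ ± yᵢ / m ≤ E max(ζⱼ, ζᵢ / m) = E ζⱼ + E (ζᵢ - m ζⱼ)⁺ / m`, i.e. `|yᵢ| ≤ E (ζᵢ - m ζⱼ)⁺`.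
Since `ζⱼ > 0` almost surely, the right-hand side tends to `0` by dominated convergence, so
`F(K, eⱼ) ⊆ {(E ζⱼ) eⱼ}`; it is nonempty because `K` is compact.
-/

open MeasureTheory Finset

open Filter Topology

lemma le_suppFn_of_isCompact {n : ℕ} {K : Set (Fin n → ℝ)} (hK : IsCompact K) (u : Fin n → ℝ)
    {y : Fin n → ℝ} (hy : y ∈ K) : u ⬝ᵥ y ≤ suppFn K u :=
  le_csSup (hK.bddAbove_image (continuous_const.dotProduct continuous_id).continuousOn) ⟨y, hy, rfl⟩

lemma exists_dotProduct_eq_suppFn {n : ℕ} {K : Set (Fin n → ℝ)} (hK : IsCompact K)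
    (hne : K.Nonempty) (u : Fin n → ℝ) : ∃ z ∈ K, u ⬝ᵥ z = suppFn K u :=
  (hK.image (continuous_const.dotProduct continuous_id)).sSup_mem (hne.image _)

lemma suppFn_had_image {n : ℕ} (c : Fin n → ℝ) (B : Set (Fin n → ℝ)) (u : Fin n → ℝ) :
    suppFn (had c '' B) u = suppFn B (had u c) := by
  simp only [suppFn, Set.image_image, had, mul_assoc]

lemma suppFn_l1Ball {n : ℕ} (v : Fin n → ℝ) : suppFn {x | ∑ i, |x i| ≤ 1} v = ‖v‖ := by
  have hbound : ∀ x ∈ {x : Fin n → ℝ | ∑ i, |x i| ≤ 1}, v ⬝ᵥ x ≤ ‖v‖ := fun x hx =>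
    calc v ⬝ᵥ x ≤ ∑ i, ‖v‖ * |x i| := sum_le_sum fun i _ =>
          (le_abs_self _).trans <| by
            rw [abs_mul]; exact mul_le_mul_of_nonneg_right (norm_le_pi_norm v i) (abs_nonneg _)
      _ = ‖v‖ * ∑ i, |x i| := (mul_sum ..).symm
      _ ≤ ‖v‖ := mul_le_of_le_one_right (norm_nonneg v) hx
  have hbdd : BddAbove ((v ⬝ᵥ ·) '' {x | ∑ i, |x i| ≤ 1}) := ⟨‖v‖, by
    rintro _ ⟨x, hx, rfl⟩; exact hbound x hx⟩
  have hsingle : ∀ k (s : ℝ), |s| ≤ 1 → v k * s ≤ suppFn {x | ∑ i, |x i| ≤ 1} v := fun k s hs =>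
    le_csSup hbdd
      ⟨Pi.single k s, by simpa [Pi.single_apply, apply_ite] using hs, dotProduct_single v s k⟩
  refine le_antisymm (csSup_le ⟨0, 0, by simp, dotProduct_zero v⟩ ?_) ?_
  · rintro _ ⟨x, hx, rfl⟩; exact hbound x hx
  · have hnonneg : 0 ≤ suppFn {x | ∑ i, |x i| ≤ 1} v :=
      le_csSup hbdd ⟨0, by simp, dotProduct_zero v⟩
    refine (pi_norm_le_iff_of_nonneg hnonneg).2 fun k => ?_
    rw [Real.norm_eq_abs, ← self_mul_sign]
    exact hsingle k _ (by rcases lt_trichotomy (v k) 0 with h | h | h <;> simp [h])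

lemma norm_single_add_single {ι E : Type*} [Fintype ι] [DecidableEq ι] [NormedAddCommGroup E]
    {i j : ι} (hij : i ≠ j) (a b : E) :
    ‖(Pi.single i a + Pi.single j b : ι → E)‖ = max ‖a‖ ‖b‖ := by
  refine le_antisymm ((pi_norm_le_iff_of_nonneg (by positivity)).2 fun k => ?_) (max_le ?_ ?_)
  · by_cases hki : k = i
    · subst hki; simp [hij]
    by_cases hkj : k = j
    · subst hkj; simp [hki]
    · simp [hki, hkj]
  · have := norm_le_pi_norm (Pi.single i a + Pi.single j b : ι → E) i
    rwa [Pi.add_apply, Pi.single_eq_same, Pi.single_eq_of_ne hij, add_zero] at this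
  · have := norm_le_pi_norm (Pi.single i a + Pi.single j b : ι → E) j
    rwa [Pi.add_apply, Pi.single_eq_of_ne hij.symm, Pi.single_eq_same, zero_add] at this

lemma had_add_left {n : ℕ} (u v c : Fin n → ℝ) : had (u + v) c = had u c + had v c :=
  add_mul u v c

lemma had_single {n : ℕ} (j : Fin n) (a : ℝ) (c : Fin n → ℝ) :
    had (Pi.single j a) c = Pi.single j (a * c j) :=
  (Pi.single_mul_left (f := c) a).symm

lemma max_div_eq_add_max_sub_mul_div {a b m : ℝ} (hm : 0 < m) :
    max a (b / m) = a + max (b - m * a) 0 / m := by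
  rw [← max_div_div_right hm.le, zero_div, sub_div, mul_div_cancel_left₀ _ hm.ne',
    ← max_add_add_left, add_zero, add_sub_cancel, max_comm]

lemma tendsto_integral_max_sub_mul_zero {Ω : Type*} [MeasurableSpace Ω] {μ : Measure Ω}
    {f g : Ω → ℝ} (hf : Integrable f μ) (hg : Integrable g μ) (hg_pos : ∀ᵐ ω ∂μ, 0 < g ω) :
    Tendsto (fun m : ℕ => ∫ ω, max (f ω - m * g ω) 0 ∂μ) atTop (𝓝 0) := by
  simpa using tendsto_integral_of_dominated_convergence
    (F := fun m ω => max (f ω - m * g ω) 0) (fun ω => |f ω|)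
    (fun m => (hf.sub (hg.const_mul m)).pos_part.aestronglyMeasurable) hf.abs
    (fun m => hg_pos.mono fun ω hω => by
      rw [Real.norm_eq_abs, abs_of_nonneg (le_max_right _ _)]
      exact max_le (by nlinarith [le_abs_self (f ω), m.cast_nonneg (α := ℝ)]) (abs_nonneg _))
    (hg_pos.mono fun ω hω => tendsto_const_nhds.congr' <|
      ((tendsto_natCast_atTop_atTop.atTop_mul_const hω).eventually_gt_atTop (f ω)).mono
        fun m hm => (max_eq_right (by linarith)).symm)

section SupportSetOfExpectation

variable {n : ℕ} {Ω : Type*} [MeasurableSpace Ω] {P : Measure Ω} {ζ : Ω → Fin n → ℝ}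
  {K : Set (Fin n → ℝ)}

lemma suppFn_single_add_single_div (hζnn : ∀ ω i, 0 ≤ ζ ω i) (hζint : Integrable ζ P)
    (hKsupp : ∀ u, suppFn K u = ∫ ω, ‖had u (ζ ω)‖ ∂P) {i j : Fin n} (hij : i ≠ j) {ε m : ℝ}
    (hε : |ε| = 1) (hm : 0 < m) :
    suppFn K (Pi.single j 1 + Pi.single i (ε / m))
      = ∫ ω, ζ ω j ∂P + (∫ ω, max (ζ ω i - m * ζ ω j) 0 ∂P) / m := by
  have hg : Integrable (fun ω => max (ζ ω i - m * ζ ω j) 0) P :=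
    ((hζint.eval i).sub ((hζint.eval j).const_mul m)).pos_part
  rw [hKsupp, ← integral_div, ← integral_add (hζint.eval j) (hg.div_const m)]
  congr 1 with ω
  rw [had_add_left, had_single, had_single, one_mul, norm_single_add_single hij.symm,
    Real.norm_eq_abs, Real.norm_eq_abs, abs_of_nonneg (hζnn ω j), abs_mul, abs_div, hε,
    abs_of_pos hm, abs_of_nonneg (hζnn ω i), div_mul_eq_mul_div, one_mul,
    max_div_eq_add_max_sub_mul_div hm]

lemma abs_apply_le_integral_max_sub_mul (hζnn : ∀ ω i, 0 ≤ ζ ω i) (hζint : Integrable ζ P)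
    (hK : IsCompact K) (hKsupp : ∀ u, suppFn K u = ∫ ω, ‖had u (ζ ω)‖ ∂P) {i j : Fin n}
    (hij : i ≠ j) {y : Fin n → ℝ} (hy : y ∈ K) (hyj : y j = ∫ ω, ζ ω j ∂P) {m : ℝ} (hm : 0 < m) :
    |y i| ≤ ∫ ω, max (ζ ω i - m * ζ ω j) 0 ∂P := by
  have key : ∀ ε : ℝ, |ε| = 1 → ε * y i ≤ ∫ ω, max (ζ ω i - m * ζ ω j) 0 ∂P := by
    intro ε hε
    have h := le_suppFn_of_isCompact hK (Pi.single j 1 + Pi.single i (ε / m)) hy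
    rwa [suppFn_single_add_single_div hζnn hζint hKsupp hij hε hm, add_dotProduct,
      single_one_dotProduct, single_dotProduct, hyj, add_le_add_iff_left, div_mul_eq_mul_div,
      div_le_div_iff_of_pos_right hm] at h
  exact abs_le.2 ⟨by linarith [key (-1) (by simp)], by linarith [key 1 (by simp)]⟩

lemma apply_eq_zero_of_apply_eq_integral (hζnn : ∀ ω i, 0 ≤ ζ ω i) (hζint : Integrable ζ P)
    (hK : IsCompact K) (hKsupp : ∀ u, suppFn K u = ∫ ω, ‖had u (ζ ω)‖ ∂P) {i j : Fin n}
    (hij : i ≠ j) (hpos : ∀ᵐ ω ∂P, 0 < ζ ω j) {y : Fin n → ℝ} (hy : y ∈ K)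
    (hyj : y j = ∫ ω, ζ ω j ∂P) : y i = 0 := by
  have hbound : ∀ᶠ m : ℕ in atTop, |y i| ≤ ∫ ω, max (ζ ω i - m * ζ ω j) 0 ∂P :=
    (eventually_gt_atTop 0).mono fun m hm =>
      abs_apply_le_integral_max_sub_mul hζnn hζint hK hKsupp hij hy hyj (Nat.cast_pos.2 hm)
  exact abs_nonpos_iff.1 <|
    ge_of_tendsto (tendsto_integral_max_sub_mul_zero (hζint.eval i) (hζint.eval j) hpos) hbound

lemma eq_single_of_apply_eq_integral (hζnn : ∀ ω i, 0 ≤ ζ ω i) (hζint : Integrable ζ P)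
    (hK : IsCompact K) (hKsupp : ∀ u, suppFn K u = ∫ ω, ‖had u (ζ ω)‖ ∂P) {j : Fin n}
    (hpos : ∀ᵐ ω ∂P, 0 < ζ ω j) {y : Fin n → ℝ} (hy : y ∈ K) (hyj : y j = ∫ ω, ζ ω j ∂P) :
    y = Pi.single j (∫ ω, ζ ω j ∂P) := by
  funext i
  rcases eq_or_ne i j with rfl | hij
  · rw [hyj, Pi.single_eq_same]
  · rw [Pi.single_eq_of_ne hij,
      apply_eq_zero_of_apply_eq_integral hζnn hζint hK hKsupp hij hpos hy hyj]

end SupportSetOfExpectation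

theorem stmt12_general {n : ℕ} {Ω : Type*} [MeasurableSpace Ω] (P : Measure Ω)
    (ζ : Ω → Fin n → ℝ) (hζnn : ∀ ω i, 0 ≤ ζ ω i) (hζint : Integrable ζ P)
    (B₁ : Set (Fin n → ℝ)) (hB₁ : B₁ = {x | ∑ i, |x i| ≤ 1})
    (K : Set (Fin n → ℝ)) (hKcpt : IsCompact K)
    (hKne : K.Nonempty)
    (hKsupp : ∀ u : Fin n → ℝ, suppFn K u = ∫ ω, suppFn (had (ζ ω) '' B₁) u ∂P)
    (j : Fin n) (hj : P {ω | ζ ω j = 0} = 0) :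
    ∃ x : Fin n → ℝ,
      {y ∈ K | ∑ i, y i * (Pi.single j 1 : Fin n → ℝ) i = suppFn K (Pi.single j 1 : Fin n → ℝ)} = {x} := by
  have hsupp : ∀ u, suppFn K u = ∫ ω, ‖had u (ζ ω)‖ ∂P := fun u => by
    simp only [hKsupp, hB₁, suppFn_had_image, suppFn_l1Ball]
  have hpos : ∀ᵐ ω ∂P, 0 < ζ ω j :=
    (measure_eq_zero_iff_ae_notMem.1 hj).mono fun ω hω => (hζnn ω j).lt_of_ne (Ne.symm hω)
  have hKj : suppFn K (Pi.single j 1) = ∫ ω, ζ ω j ∂P := by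
    simp only [hsupp, had_single, one_mul, Pi.norm_single, Real.norm_eq_abs,
      abs_of_nonneg (hζnn _ j)]
  have hface : ∀ y ∈ K, y ⬝ᵥ Pi.single j 1 = suppFn K (Pi.single j 1) →
      y = Pi.single j (∫ ω, ζ ω j ∂P) := fun y hy hyF =>
    eq_single_of_apply_eq_integral hζnn hζint hKcpt hsupp hpos hy
      (by rwa [dotProduct_single_one, hKj] at hyF)
  obtain ⟨z, hzK, hz⟩ := exists_dotProduct_eq_suppFn hKcpt hKne (Pi.single j 1)
  rw [dotProduct_comm] at hz
  exact ⟨z, Set.eq_singleton_iff_unique_mem.2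
    ⟨⟨hzK, hz⟩, fun y ⟨hy, hyF⟩ => (hface y hy hyF).trans (hface z hzK hz).symm⟩⟩

theorem stmt12 {n : ℕ} {Ω : Type*} [MeasurableSpace Ω] (P : Measure Ω)
    [IsProbabilityMeasure P]
    (ζ : Ω → Fin n → ℝ) (hζnn : ∀ ω i, 0 ≤ ζ ω i) (hζint : Integrable ζ P)
    (B₁ : Set (Fin n → ℝ)) (hB₁ : B₁ = {x | ∑ i, |x i| ≤ 1})
    (K : Set (Fin n → ℝ)) (hKconv : Convex ℝ K) (hKcpt : IsCompact K)
    (hKne : K.Nonempty)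
    (hKsupp : ∀ u : Fin n → ℝ, suppFn K u = ∫ ω, suppFn (had (ζ ω) '' B₁) u ∂P)
    (j : Fin n) (hj : P {ω | ζ ω j = 0} = 0) :
    ∃ x : Fin n → ℝ,
      {y ∈ K | ∑ i, y i * (Pi.single j 1 : Fin n → ℝ) i = suppFn K (Pi.single j 1 : Fin n → ℝ)} = {x} :=
  stmt12_general P ζ hζnn hζint B₁ hB₁ K hKcpt hKne hKsupp j hj
end
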